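/- Fix z ∈ ℝ^d. Let H₀ have Lebesgue density h₀(d²(y,μ₀,Σ₀)) (elliptically symmetric with center μ₀ and positive definite scatter Σ₀). For I ⊆ {1,…,d}, let H(I,z) denote the law of the vector whose i-th coordinate equals z_i if i ∈ I and equals Y_i if i ∉ I, Y ~ H₀; write Δ_z = H({1,…,d},z) for the point mass at z. Define g(H,m,Σ) = ∫ ψ(d²(x,m,Σ))(x−m) dH(x), and for ε ∈ [0,1) set α(ε) = ε/(2−ε) and β(ε) = ε/2, and let p_I(ε) = α(ε)·1{I = {1,…,d}} + (1−α(ε))·(1−β(ε))^{d−|I|} β(ε)^{|I|} be the PSICM contamination-configuration probabilities. Suppose: ε ↦ μ(ε) ∈ ℝ^d and ε ↦ Σ(ε) (symmetric positive definite) are differentiable at 0 with μ(0) = μ₀ and Σ(0) = Σ₀; for all ε in a right neighborhood of 0, ∑_{I ⊆ {1,…,d}} p_I(ε) · g(H(I,z),μ(ε),Σ(ε)) = 0; each (m,Σ) ↦ g(H(I,z),m,Σ) is continuously differentiable near (μ₀,Σ₀); g(H₀,μ₀,Σ) = 0 for all symmetric positive definite Σ near Σ₀; and the Jacobian of m ↦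 g(H₀,m,Σ₀) at μ₀ equals −A_ψ I_d with A_ψ ≠ 0. Then μ'(0) = (1/(2A_ψ)) [ ∑_{k=1}^d g(H({k},z), μ₀, Σ₀) + g(Δ_z, μ₀, Σ₀) ]; that is, the influence function under PSICM is the average of the influence functions under FDCM and FICM. -/

import Mathlib

open MeasureTheory

/-- Squared Mahalanobis distance `d²(x,m,S) = (x-m)ᵀ S⁻¹ (x-m)`. -/
noncomputable def mahala2 {d : ℕ} (x m : Fin d → ℝ) (S : Matrix (Fin d) (Fin d) ℝ) : ℝ :=
  dotProduct (x - m) ((S⁻¹).mulVec (x - m))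

/-- `g(H,m,Σ) = ∫ ψ(d²(x,m,Σ)) (x-m) dH(x)`. -/
noncomputable def gfun {d : ℕ} (ψ : ℝ → ℝ) (H : Measure (Fin d → ℝ))
    (m : Fin d → ℝ) (S : Matrix (Fin d) (Fin d) ℝ) : Fin d → ℝ :=
  ∫ x, ψ (mahala2 x m S) • (x - m) ∂H

/-- `H(I,z)`: the law of the vector whose `i`-th coordinate is `z i` for `i ∈ I` and
`Y i` for `i ∉ I`, where `Y ~ H₀`. -/
noncomputable def partialContam {d : ℕ} (H₀ : Measure (Fin d → ℝ)) (z : Fin d → ℝ)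
    (I : Finset (Fin d)) : Measure (Fin d → ℝ) :=
  H₀.map (fun y => fun i => if i ∈ I then z i else y i)

/-- PSICM contamination-configuration probabilities with `α(ε) = ε/(2-ε)` and
`β(ε) = ε/2`:
`p_I(ε) = α(ε) 1{I = {1,…,d}} + (1-α(ε)) (1-β(ε))^{d-|I|} β(ε)^{|I|}`. -/
noncomputable def psicmWeight (d : ℕ) (ε : ℝ) (I : Finset (Fin d)) : ℝ :=
  (ε / (2 - ε)) * (if I = Finset.univ then 1 else 0) +
    (1 - ε / (2 - ε)) * (1 - ε / 2) ^ (d - I.card) * (ε / 2) ^ I.card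

/-!
Differentiate the estimating equation from the right at `ε = 0`. Since `p_I(0) = 1{I = ∅}`,
the movement of `(μ(ε), Σ(ε))` is only felt through `g(H₀, ·, ·)`: Fisher consistency along
the scatter curve kills its `Σ`-derivative, and the Jacobian turns the `μ`-derivative into
`-A_ψ μ'(0)`. Of the weight derivatives, `p'_I(0) = 1/2` for `I = {1,…,d}` (from `α' = 1/2`)
and for singletons (from `β' = 1/2`), while the one at `I = ∅` is multiplied by
`g(H₀, μ₀, Σ₀) = 0`. Hence `-A_ψ μ'(0) + (1/2) (∑ₖ g(H({k},z)) + g(Δ_z)) = 0`.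
-/

open Filter Topology

section PSICMWeights

variable {d : ℕ}

theorem psicmWeight_zero (I : Finset (Fin d)) :
    psicmWeight d 0 I = if I = ∅ then 1 else 0 := by
  simp [psicmWeight, zero_pow_eq, Finset.card_eq_zero]

noncomputable def psicmWeightDeriv (d : ℕ) (I : Finset (Fin d)) : ℝ :=
  (if I = Finset.univ then 1 / 2 else 0) + (if I = ∅ then -(1 + d : ℝ) / 2 else 0) +
    (if I.card = 1 then 1 / 2 else 0)

theorem hasDerivAt_div_two_sub : HasDerivAt (fun ε : ℝ => ε / (2 - ε)) (1 / 2) 0 := by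
  refine ((hasDerivAt_id' 0).fun_div ((hasDerivAt_id' 0).const_sub 2) ?_).congr_deriv ?_ <;>
    norm_num

theorem hasDerivAt_one_sub_div_two_sub_mul_pow_mul_pow (n c : ℕ) :
    HasDerivAt (fun ε : ℝ => (1 - ε / (2 - ε)) * (1 - ε / 2) ^ n * (ε / 2) ^ c)
      (if c = 0 then -(1 + n : ℝ) / 2 else if c = 1 then 1 / 2 else 0) 0 := by
  have hβ : HasDerivAt (fun ε : ℝ => ε / 2) (1 / 2) 0 := (hasDerivAt_id' 0).div_const 2
  refine (((hasDerivAt_div_two_sub.const_sub 1).mul ((hβ.const_sub 1).pow n)).mul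
    (hβ.pow c)).congr_deriv ?_
  rcases c with _ | _ | c
  · simp
    ring
  · simp
  · simp

theorem hasDerivAt_psicmWeight (I : Finset (Fin d)) :
    HasDerivAt (fun ε => psicmWeight d ε I) (psicmWeightDeriv d I) 0 := by
  refine ((hasDerivAt_div_two_sub.mul_const (if I = Finset.univ then 1 else 0)).add
    (hasDerivAt_one_sub_div_two_sub_mul_pow_mul_pow (d - I.card) I.card)).congr_deriv ?_
  by_cases h0 : I = ∅
  · subst h0
    simp [psicmWeightDeriv]
  simp [psicmWeightDeriv, h0, Finset.card_eq_zero]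

theorem sum_psicmWeightDeriv_smul {E : Type*} [AddCommGroup E] [Module ℝ E]
    (v : Finset (Fin d) → E) (hv : v ∅ = 0) :
    ∑ I, psicmWeightDeriv d I • v I = (2 : ℝ)⁻¹ • (∑ k, v {k} + v Finset.univ) := by
  simp only [psicmWeightDeriv, add_smul, ite_smul, zero_smul, Finset.sum_add_distrib,
    Finset.sum_ite_eq', Finset.mem_univ, if_true, hv, smul_zero, add_zero]
  rw [← Finset.sum_filter, ← Finset.smul_sum, ← Finset.powerset_univ,
    ← Finset.powersetCard_eq_filter, Finset.powersetCard_one, Finset.sum_map]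
  rw [one_div, smul_add, add_comm]
  rfl

end PSICMWeights

theorem partialContam_empty {d : ℕ} (H : Measure (Fin d → ℝ)) (z : Fin d → ℝ) :
    partialContam H z ∅ = H := by
  simp [partialContam]

theorem partialContam_univ {d : ℕ} (H : Measure (Fin d → ℝ)) [IsProbabilityMeasure H]
    (z : Fin d → ℝ) : partialContam H z Finset.univ = Measure.dirac z := by
  simp [partialContam, Measure.map_const]

theorem HasDerivAt.eq_zero_of_eventuallyEq_zero_nhdsGT {F : Type*} [NormedAddCommGroup F]
    [NormedSpace ℝ F] {f : ℝ → F} {f' : F} {x : ℝ} (hf : HasDerivAt f f' x)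
    (h : f =ᶠ[𝓝[>] x] 0) : f' = 0 := by
  have hx : f x = 0 := tendsto_nhds_unique (hf.continuousAt.tendsto.mono_left nhdsWithin_le_nhds)
    (tendsto_const_nhds.congr' h.symm)
  exact (uniqueDiffWithinAt_Ioi x).eq_deriv _ hf.hasDerivWithinAt
    ((hasDerivWithinAt_const x _ 0).congr_of_eventuallyEq h hx)

theorem sum_smul_fderiv_add_deriv_smul_eq_zero {ι E F : Type*} [Fintype ι]
    [NormedAddCommGroup E] [NormedSpace ℝ E] [NormedAddCommGroup F] [NormedSpace ℝ F]
    {w : ι → ℝ → ℝ} {w' : ι → ℝ} {G : ι → E → F} {G' : ι → E →L[ℝ] F}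
    {θ : ℝ → E} {θ' x₀ : E} (hw : ∀ i, HasDerivAt (w i) (w' i) 0)
    (hG : ∀ i, HasFDerivAt (G i) (G' i) x₀) (hθ : HasDerivAt θ θ' 0) (hθ₀ : θ 0 = x₀)
    (h : ∀ᶠ ε in 𝓝[>] 0, ∑ i, w i ε • G i (θ ε) = 0) :
    ∑ i, (w i 0 • G' i θ' + w' i • G i x₀) = 0 := by
  subst hθ₀
  exact (HasDerivAt.fun_sum fun i _ => (hw i).smul ((hG i).comp_hasDerivAt 0 hθ))
    |>.eq_zero_of_eventuallyEq_zero_nhdsGT h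

section PartialDerivatives

variable {E F V : Type*} [NormedAddCommGroup E] [NormedSpace ℝ E] [NormedAddCommGroup F]
  [NormedSpace ℝ F] [NormedAddCommGroup V] [NormedSpace ℝ V] {G : E × F → V} {L : E × F →L[ℝ] V}
  {a : E} {b : F}

theorem HasFDerivAt.apply_inl_eq_of_hasFDerivAt_left (hG : HasFDerivAt G L (a, b))
    {L' : E →L[ℝ] V} (h : HasFDerivAt (fun m => G (m, b)) L' a) (v : E) : L (v, 0) = L' v := by
  simpa using congr($((hG.comp a (hasFDerivAt_prodMk_left (𝕜 := ℝ) a b)).unique h) v)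

theorem HasFDerivAt.apply_inr_eq_zero_of_eventually_nhdsGT (hG : HasFDerivAt G L (a, b))
    {S : ℝ → F} {S' : F} (hS : HasDerivAt S S' 0) (hS₀ : S 0 = b)
    (h : ∀ᶠ ε in 𝓝[>] 0, G (a, S ε) = 0) : L (0, S') = 0 :=
  (hG.comp_hasDerivAt_of_eq 0 ((hasDerivAt_const 0 a).prodMk hS) (by rw [hS₀]))
    |>.eq_zero_of_eventuallyEq_zero_nhdsGT h

end PartialDerivatives

theorem influence_function_PSICM_general
    {d : ℕ} (ψ : ℝ → ℝ) (μ₀ : Fin d → ℝ)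
    (S₀ : Fin d → Fin d → ℝ) (hS₀ : (Matrix.of S₀).PosDef)
    (ν : Measure (Fin d → ℝ)) [IsProbabilityMeasure ν]
    (z : Fin d → ℝ)
    (μfun : ℝ → Fin d → ℝ) (Sfun : ℝ → Fin d → Fin d → ℝ)
    (μder : Fin d → ℝ)
    (hμder : HasDerivAt μfun μder 0) (hSdiff : DifferentiableAt ℝ Sfun 0)
    (hμ0 : μfun 0 = μ₀) (hS0 : Sfun 0 = S₀)
    (hpos : ∀ᶠ ε in nhdsWithin 0 (Set.Ioi (0 : ℝ)), (Matrix.of (Sfun ε)).PosDef)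
    (heq : ∀ᶠ ε in nhdsWithin 0 (Set.Ioi (0 : ℝ)),
      ∑ I : Finset (Fin d),
        psicmWeight d ε I •
          gfun ψ (partialContam ν z I) (μfun ε) (Matrix.of (Sfun ε)) = 0)
    (hsmooth : ∀ I : Finset (Fin d), ContDiffAt ℝ 1
      (fun p : (Fin d → ℝ) × (Fin d → Fin d → ℝ) =>
        gfun ψ (partialContam ν z I) p.1 (Matrix.of p.2))
      (μ₀, S₀))
    (hfisher : ∀ᶠ S in nhds S₀, (Matrix.of S).PosDef →
      gfun ψ ν μ₀ (Matrix.of S) = 0)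
    (Aψ : ℝ) (hAψ : Aψ ≠ 0)
    (hjac : HasFDerivAt (fun m => gfun ψ ν m (Matrix.of S₀))
      (-Aψ • ContinuousLinearMap.id ℝ (Fin d → ℝ)) μ₀) :
    μder = (2 * Aψ)⁻¹ •
      ((∑ k : Fin d, gfun ψ (partialContam ν z {k}) μ₀ (Matrix.of S₀)) +
        gfun ψ (Measure.dirac z) μ₀ (Matrix.of S₀)) := by
  obtain ⟨Sder, hSder⟩ : ∃ Sder, HasDerivAt Sfun Sder 0 := ⟨_, hSdiff.hasDerivAt⟩
  set G : Finset (Fin d) → (Fin d → ℝ) × (Fin d → Fin d → ℝ) → Fin d → ℝ :=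
    fun I p => gfun ψ (partialContam ν z I) p.1 (Matrix.of p.2)
  have hG (I) : HasFDerivAt (G I) (fderiv ℝ (G I) (μ₀, S₀)) (μ₀, S₀) :=
    ((hsmooth I).differentiableAt one_ne_zero).hasFDerivAt
  have hG_empty (m S) : G ∅ (m, S) = gfun ψ ν m (Matrix.of S) := by
    simp only [G, partialContam_empty]
  have hloc : fderiv ℝ (G ∅) (μ₀, S₀) (μder, 0) = -Aψ • μder := by
    rw [(hG ∅).apply_inl_eq_of_hasFDerivAt_left (by simpa only [hG_empty] using hjac)]
    rfl
  have hscat : fderiv ℝ (G ∅) (μ₀, S₀) (0, Sder) = 0 := by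
    refine (hG ∅).apply_inr_eq_zero_of_eventually_nhdsGT hSder hS0 ?_
    have hfisher' := hSder.continuousAt.eventually (hS0 ▸ hfisher)
    filter_upwards [hpos, nhdsWithin_le_nhds hfisher'] with ε hε hε'
    exact (hG_empty _ _).trans (hε' hε)
  have key := sum_smul_fderiv_add_deriv_smul_eq_zero hasDerivAt_psicmWeight hG
    (hμder.prodMk hSder) (by rw [hμ0, hS0]) heq
  have hDG : fderiv ℝ (G ∅) (μ₀, S₀) (μder, Sder) = -Aψ • μder := by
    rw [show (μder, Sder) = (μder, 0) + (0, Sder) by simp, map_add, hloc, hscat, add_zero]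
  have hG_empty₀ : G ∅ (μ₀, S₀) = 0 :=
    (hG_empty μ₀ S₀).trans (hfisher.self_of_nhds hS₀)
  simp only [Finset.sum_add_distrib, psicmWeight_zero, ite_smul, one_smul, zero_smul,
    Finset.sum_ite_eq', Finset.mem_univ, if_true, hDG] at key
  rw [sum_psicmWeightDeriv_smul _ hG_empty₀] at key
  simp only [G, partialContam_univ] at key
  rw [eq_inv_smul_iff₀ (mul_ne_zero two_ne_zero hAψ)]
  linear_combination (norm := module) (-2 : ℝ) • key

/-- The influence function of an M-estimator of multivariate location under the
partially spoiled independent contamination model (PSICM): under the stated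
regularity conditions,
`μ'(0) = (1/(2A_ψ)) [∑_{k=1}^d g(H({k},z),μ₀,Σ₀) + g(Δ_z,μ₀,Σ₀)]`,
the average of the FICM and FDCM influence functions. -/
theorem influence_function_PSICM
    {d : ℕ} (ψ : ℝ → ℝ) (h₀ : ℝ → ℝ) (μ₀ : Fin d → ℝ)
    (S₀ : Fin d → Fin d → ℝ) (hS₀ : (Matrix.of S₀).PosDef)
    (ν : Measure (Fin d → ℝ)) [IsProbabilityMeasure ν]
    (hν : ν = volume.withDensity
      (fun y => ENNReal.ofReal (h₀ (mahala2 y μ₀ (Matrix.of S₀)))))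
    (z : Fin d → ℝ)
    (μfun : ℝ → Fin d → ℝ) (Sfun : ℝ → Fin d → Fin d → ℝ)
    (μder : Fin d → ℝ)
    (hμder : HasDerivAt μfun μder 0) (hSdiff : DifferentiableAt ℝ Sfun 0)
    (hμ0 : μfun 0 = μ₀) (hS0 : Sfun 0 = S₀)
    (hpos : ∀ᶠ ε in nhdsWithin 0 (Set.Ioi (0 : ℝ)), (Matrix.of (Sfun ε)).PosDef)
    (heq : ∀ᶠ ε in nhdsWithin 0 (Set.Ioi (0 : ℝ)),
      ∑ I : Finset (Fin d),
        psicmWeight d ε I •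
          gfun ψ (partialContam ν z I) (μfun ε) (Matrix.of (Sfun ε)) = 0)
    (hsmooth : ∀ I : Finset (Fin d), ContDiffAt ℝ 1
      (fun p : (Fin d → ℝ) × (Fin d → Fin d → ℝ) =>
        gfun ψ (partialContam ν z I) p.1 (Matrix.of p.2))
      (μ₀, S₀))
    (hfisher : ∀ᶠ S in nhds S₀, (Matrix.of S).PosDef →
      gfun ψ ν μ₀ (Matrix.of S) = 0)
    (Aψ : ℝ) (hAψ : Aψ ≠ 0)
    (hjac : HasFDerivAt (fun m => gfun ψ ν m (Matrix.of S₀))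
      (-Aψ • ContinuousLinearMap.id ℝ (Fin d → ℝ)) μ₀) :
    μder = (2 * Aψ)⁻¹ •
      ((∑ k : Fin d, gfun ψ (partialContam ν z {k}) μ₀ (Matrix.of S₀)) +
        gfun ψ (Measure.dirac z) μ₀ (Matrix.of S₀)) :=
  influence_function_PSICM_general ψ μ₀ S₀ hS₀ ν z μfun Sfun μder hμder hSdiff hμ0 hS0 hpos heq
    hsmooth hfisher Aψ hAψ hjac
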